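/- (Lemma 2.1) Let α be a positive integer, 0 < p = 1 - q < 1, z ≥ 0, and let g_z be the solution of the binomial Stein equation, i.e. g_z(0) = 0 and g_z(k) = -∑_{j=k}^{α} [(α-k)!/(α-j)!]·[(k-1)!/j!]·(p/q)^{j-k}·[(j-z)^+ - E(B_{α,p}-z)^+] for 1 ≤ k ≤ α, with g_z(α+1) = 0. Writing Δg_z(k) = g_z(k+1) - g_z(k), the following holds: |Δg_z(0)| ≤ 2q^{1-α} - q, and |Δg_z(k)| ≤ 2q^{k-α} for 1 ≤ k ≤ α. -/

import Mathlib

/-!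
Write `b(j) = C(α,j) p^j q^(α-j)`. The coefficients of `g_z` are `b(j) / (k b(k))`, so
`k b(k) g_z(k) = -∑_{j ≥ k} b(j) ((j-z)^+ - E(B-z)^+)`. Since `0 ≤ (j-z)^+ ≤ j`, both
`∑_{j ≥ k} b(j) (j-z)^+` and `P(B ≥ k) E(B-z)^+` lie in `[0, αp P(B' ≥ k-1)]`, where `B'`
is binomial with `α-1` trials and weights `b'`; moreover `k b(k) = αp b'(k-1)`. The tail
estimate `q^(α-k) P(B' ≥ k-1) ≤ b'(k-1)` then gives `|g_z(k)| ≤ q^(k-α)`, and both bounds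
follow by the triangle inequality, using `g_z(0) = g_z(α+1) = 0`.
-/

open Finset

/-- `E[(B_{α,p} - z)^+]`, the expected call function of a binomial random variable
`B_{α,p}` with `P(B = j) = C(α,j) p^j (1-p)^{α-j}` for `j = 0,…,α`. -/
noncomputable def binomCallExp (α : ℕ) (p z : ℝ) : ℝ :=
  ∑ j ∈ Finset.range (α + 1),
    (α.choose j : ℝ) * p ^ j * (1 - p) ^ (α - j) * max ((j : ℝ) - z) 0

/-- `h₁(k) = ∑_{j=k}^{α} [(α-k)!/(α-j)!]·[(k-1)!/j!]·(p/q)^{j-k}·(j-z)^+` with `q = 1 - p`. -/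
noncomputable def h1 (α : ℕ) (p z : ℝ) (k : ℕ) : ℝ :=
  ∑ j ∈ Finset.Icc k α,
    ((α - k).factorial : ℝ) / ((α - j).factorial : ℝ) *
      (((k - 1).factorial : ℝ) / (j.factorial : ℝ)) *
        (p / (1 - p)) ^ (j - k) * max ((j : ℝ) - z) 0

/-- `h₂(k) = ∑_{j=k}^{α} [(α-k)!/(α-j)!]·[(k-1)!/j!]·(p/q)^{j-k}·E[(B_{α,p}-z)^+]`
with `q = 1 - p`. -/
noncomputable def h2 (α : ℕ) (p z : ℝ) (k : ℕ) : ℝ :=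
  ∑ j ∈ Finset.Icc k α,
    ((α - k).factorial : ℝ) / ((α - j).factorial : ℝ) *
      (((k - 1).factorial : ℝ) / (j.factorial : ℝ)) *
        (p / (1 - p)) ^ (j - k) * binomCallExp α p z

/-- The solution `g_z` of the binomial Stein equation: `g_z(0) = 0`,
`g_z(k) = -∑_{j=k}^{α} [(α-k)!/(α-j)!]·[(k-1)!/j!]·(p/q)^{j-k}·[(j-z)^+ - E(B_{α,p}-z)^+]`
for `1 ≤ k ≤ α`, extended by `g_z(k) = 0` for `k > α` (in particular `g_z(α+1) = 0`). -/
noncomputable def steinSol (α : ℕ) (p z : ℝ) (k : ℕ) : ℝ :=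
  if k = 0 ∨ α < k then 0
  else
    -∑ j ∈ Finset.Icc k α,
      ((α - k).factorial : ℝ) / ((α - j).factorial : ℝ) *
        (((k - 1).factorial : ℝ) / (j.factorial : ℝ)) *
          (p / (1 - p)) ^ (j - k) * (max ((j : ℝ) - z) 0 - binomCallExp α p z)

noncomputable def binomWeight (n : ℕ) (p : ℝ) (j : ℕ) : ℝ :=
  (n.choose j : ℝ) * p ^ j * (1 - p) ^ (n - j)

noncomputable def binomTail (n : ℕ) (p : ℝ) (k : ℕ) : ℝ :=
  ∑ j ∈ Icc k n, binomWeight n p j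

section Binomial

variable {p : ℝ}

lemma binomWeight_nonneg (hp : 0 ≤ p) (hp1 : p ≤ 1) (n j : ℕ) : 0 ≤ binomWeight n p j := by
  have : 0 ≤ 1 - p := by linarith
  unfold binomWeight
  positivity

lemma binomWeight_pos (hp : 0 < p) (hp1 : p < 1) {n j : ℕ} (hj : j ≤ n) :
    0 < binomWeight n p j := by
  have : 0 < 1 - p := by linarith
  have : 0 < (n.choose j : ℝ) := by exact_mod_cast Nat.choose_pos hj
  unfold binomWeight
  positivity

lemma binomTail_nonneg (hp : 0 ≤ p) (hp1 : p ≤ 1) (n k : ℕ) : 0 ≤ binomTail n p k :=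
  sum_nonneg fun j _ ↦ binomWeight_nonneg hp hp1 n j

lemma binomWeight_of_lt {n j : ℕ} (h : n < j) : binomWeight n p j = 0 := by
  simp [binomWeight, Nat.choose_eq_zero_of_lt h]

lemma sum_range_binomWeight (n : ℕ) (p : ℝ) :
    ∑ j ∈ range (n + 1), binomWeight n p j = 1 := by
  have h := add_pow p (1 - p) n
  rw [add_sub_cancel, one_pow] at h
  exact (sum_congr rfl fun j _ ↦ by unfold binomWeight; ring).trans h.symm

lemma binomWeight_succ_succ (n j : ℕ) (p : ℝ) :
    binomWeight (n + 1) p (j + 1) = p * binomWeight n p j + (1 - p) * binomWeight n p (j + 1) := by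
  rcases lt_trichotomy j n with hjn | rfl | hnj
  · obtain ⟨d, rfl⟩ := Nat.exists_eq_add_of_lt hjn
    simp only [binomWeight, Nat.choose_succ_succ', show j + d + 1 + 1 - (j + 1) = d + 1 by omega,
      show j + d + 1 - j = d + 1 by omega, show j + d + 1 - (j + 1) = d by omega]
    push_cast
    ring
  · simp [binomWeight, Nat.choose_succ_self]
    ring
  · simp [binomWeight_of_lt, hnj, Nat.lt_succ_of_lt hnj]

lemma succ_mul_binomWeight_succ (n j : ℕ) (p : ℝ) :
    ((j : ℝ) + 1) * binomWeight (n + 1) p (j + 1) = (n + 1) * p * binomWeight n p j := by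
  have h : ((n : ℝ) + 1) * n.choose j = (n + 1).choose (j + 1) * ((j : ℝ) + 1) := by
    exact_mod_cast Nat.add_one_mul_choose_eq n j
  simp only [binomWeight, Nat.add_sub_add_right, pow_succ]
  linear_combination (-(p ^ j * p * (1 - p) ^ (n - j))) * h

lemma sum_range_binomWeight_mul_self (n : ℕ) (p : ℝ) :
    ∑ j ∈ range (n + 2), binomWeight (n + 1) p j * j = (n + 1) * p := by
  rw [sum_range_succ', Nat.cast_zero, mul_zero, add_zero]
  simp_rw [Nat.cast_succ, mul_comm (binomWeight _ _ _), succ_mul_binomWeight_succ, ← mul_sum,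
    sum_range_binomWeight, mul_one]

lemma sum_Icc_succ_eq (f : ℕ → ℝ) (a b : ℕ) :
    ∑ j ∈ Icc (a + 1) (b + 1), f j = ∑ i ∈ Icc a b, f (i + 1) := by
  rw [← map_add_right_Icc, sum_map]
  rfl

lemma sum_Icc_binomWeight_mul_self (n l : ℕ) (p : ℝ) :
    ∑ j ∈ Icc (l + 1) (n + 1), binomWeight (n + 1) p j * j = (n + 1) * p * binomTail n p l := by
  simp_rw [sum_Icc_succ_eq, binomTail, mul_sum, Nat.cast_succ, mul_comm (binomWeight _ _ _),
    succ_mul_binomWeight_succ]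

lemma binomTail_succ_succ_le (hp : 0 ≤ p) (hp1 : p ≤ 1) (n l : ℕ) :
    binomTail (n + 1) p (l + 1) ≤ binomTail n p l := by
  have hshift : ∑ i ∈ Icc l n, binomWeight n p (i + 1) ≤ binomTail n p l := by
    rw [← sum_Icc_succ_eq (binomWeight n p)]
    calc ∑ j ∈ Icc (l + 1) (n + 1), binomWeight n p j
        ≤ ∑ j ∈ Icc l (n + 1), binomWeight n p j :=
          sum_le_sum_of_subset_of_nonneg (Icc_subset_Icc (by omega) le_rfl)
            fun j _ _ ↦ binomWeight_nonneg hp hp1 n j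
      _ = binomTail n p l := by
          rcases Nat.lt_or_ge (n + 1) l with h | h
          · rw [Icc_eq_empty (by omega), binomTail, Icc_eq_empty (by omega)]
          · rw [sum_Icc_succ_top h, binomWeight_of_lt (Nat.lt_succ_self n), add_zero, binomTail]
  have hq : 0 ≤ 1 - p := by linarith
  have hT := binomTail_nonneg hp hp1 n l
  calc binomTail (n + 1) p (l + 1)
      = p * binomTail n p l + (1 - p) * ∑ i ∈ Icc l n, binomWeight n p (i + 1) := by
        simp_rw [binomTail, sum_Icc_succ_eq, binomWeight_succ_succ, sum_add_distrib, mul_sum]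
    _ ≤ p * binomTail n p l + (1 - p) * binomTail n p l := by gcongr
    _ = binomTail n p l := by ring

/-- Termwise, `C(n,i) ≤ C(n,l) C(n-l,i-l)` bounds the left side by `b_n(l)` times the total mass
of `Bin(n-l, p)`. -/
lemma pow_mul_binomTail_le (hp : 0 ≤ p) (hp1 : p ≤ 1) {n l : ℕ} (hl : l ≤ n) :
    (1 - p) ^ (n - l) * binomTail n p l ≤ binomWeight n p l := by
  have hq : 0 ≤ 1 - p := by linarith
  have hterm : ∀ i ∈ Icc l n, (1 - p) ^ (n - l) * binomWeight n p i
      ≤ binomWeight n p l * binomWeight (n - l) p (i - l) := by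
    intro i hi
    obtain ⟨hli, hin⟩ := mem_Icc.mp hi
    have hchoose : (n.choose i : ℝ) ≤ n.choose l * (n - l).choose (i - l) := by
      rw [← Nat.cast_mul, ← Nat.choose_mul hli]
      exact_mod_cast Nat.le_mul_of_pos_right _ (Nat.choose_pos hli)
    have hpow : p ^ i = p ^ l * p ^ (i - l) := by rw [← pow_add, Nat.add_sub_cancel' hli]
    have hsub : n - l - (i - l) = n - i := by omega
    simp only [binomWeight, hsub, hpow]
    set x := p ^ l * p ^ (i - l) * (1 - p) ^ (n - i) * (1 - p) ^ (n - l)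
    have hx : 0 ≤ x := by positivity
    calc (1 - p) ^ (n - l) * (n.choose i * (p ^ l * p ^ (i - l)) * (1 - p) ^ (n - i))
        = n.choose i * x := by ring
      _ ≤ n.choose l * (n - l).choose (i - l) * x := by gcongr
      _ = _ := by ring
  have hsum : ∑ i ∈ Icc l n, binomWeight (n - l) p (i - l) = 1 := by
    have hIcc : Icc l n = (Icc 0 (n - l)).map (addRightEmbedding l) := by
      rw [map_add_right_Icc, zero_add, Nat.sub_add_cancel hl]
    rw [hIcc, sum_map]
    simp only [addRightEmbedding_apply, Nat.add_sub_cancel, ← Nat.range_succ_eq_Icc_zero]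
    exact sum_range_binomWeight _ p
  calc (1 - p) ^ (n - l) * binomTail n p l
      ≤ ∑ i ∈ Icc l n, binomWeight n p l * binomWeight (n - l) p (i - l) := by
        rw [binomTail, mul_sum]
        exact sum_le_sum hterm
    _ = binomWeight n p l := by rw [← mul_sum, hsum, mul_one]

end Binomial

section Stein

variable {p z : ℝ}

lemma steinSol_zero (α : ℕ) : steinSol α p z 0 = 0 := by
  simp [steinSol]

lemma steinSol_of_lt {α k : ℕ} (h : α < k) : steinSol α p z k = 0 := by
  simp [steinSol, h]

lemma steinCoeff_mul_binomWeight (hp1 : p ≠ 1) {n k j : ℕ} (hk : 1 ≤ k) (hkj : k ≤ j)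
    (hjn : j ≤ n) :
    ((n - k).factorial : ℝ) / (n - j).factorial * (((k - 1).factorial : ℝ) / j.factorial) *
      (p / (1 - p)) ^ (j - k) * (k * binomWeight n p k) = binomWeight n p j := by
  have hfact : (n - k).factorial * (k - 1).factorial * (k * n.choose k)
      = n.choose j * ((n - j).factorial * j.factorial) := by
    calc (n - k).factorial * (k - 1).factorial * (k * n.choose k)
        = n.choose k * (k * (k - 1).factorial) * (n - k).factorial := by ring
      _ = n.factorial := by
        rw [Nat.mul_factorial_pred (by omega),
          Nat.choose_mul_factorial_mul_factorial (hkj.trans hjn)]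
      _ = n.choose j * ((n - j).factorial * j.factorial) := by
        rw [← Nat.choose_mul_factorial_mul_factorial hjn]; ring
  have hfact' : ((n - k).factorial : ℝ) * (k - 1).factorial * (k * n.choose k)
      = n.choose j * ((n - j).factorial * j.factorial) := by exact_mod_cast hfact
  have hq : 1 - p ≠ 0 := sub_ne_zero.mpr hp1.symm
  have hp_pow : p ^ j = p ^ (j - k) * p ^ k := by rw [← pow_add, Nat.sub_add_cancel hkj]
  have hq_pow : (1 - p) ^ (n - k) = (1 - p) ^ (j - k) * (1 - p) ^ (n - j) := by
    rw [← pow_add]; congr 1; omega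
  simp only [binomWeight, div_pow, hp_pow, hq_pow]
  field_simp
  linear_combination (p ^ (j - k) * p ^ k) * hfact'

lemma steinSol_mul_eq (hp1 : p ≠ 1) {n k : ℕ} (hk : 1 ≤ k) (hkn : k ≤ n) :
    steinSol n p z k * (k * binomWeight n p k) =
      -∑ j ∈ Icc k n, binomWeight n p j * (max ((j : ℝ) - z) 0 - binomCallExp n p z) := by
  rw [steinSol, if_neg (by omega), neg_mul, sum_mul]
  congr 1
  refine sum_congr rfl fun j hj ↦ ?_
  obtain ⟨hkj, hjn⟩ := mem_Icc.mp hj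
  rw [← steinCoeff_mul_binomWeight hp1 hk hkj hjn]
  ring

lemma binomCallExp_nonneg (hp : 0 ≤ p) (hp1 : p ≤ 1) (n : ℕ) : 0 ≤ binomCallExp n p z :=
  sum_nonneg fun j _ ↦ mul_nonneg (binomWeight_nonneg hp hp1 n j) (le_max_right _ _)

lemma max_natCast_sub_le_self (hz : 0 ≤ z) (j : ℕ) : max ((j : ℝ) - z) 0 ≤ j :=
  max_le (by linarith) (Nat.cast_nonneg j)

lemma binomCallExp_le (hp : 0 ≤ p) (hp1 : p ≤ 1) (hz : 0 ≤ z) (n : ℕ) :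
    binomCallExp (n + 1) p z ≤ (n + 1) * p := by
  rw [← sum_range_binomWeight_mul_self]
  exact sum_le_sum fun j _ ↦
    mul_le_mul_of_nonneg_left (max_natCast_sub_le_self hz j) (binomWeight_nonneg hp hp1 _ j)

lemma abs_sum_binomWeight_mul_call_sub_le (hp : 0 ≤ p) (hp1 : p ≤ 1) (hz : 0 ≤ z)
    (n l : ℕ) :
    |∑ j ∈ Icc (l + 1) (n + 1),
        binomWeight (n + 1) p j * (max ((j : ℝ) - z) 0 - binomCallExp (n + 1) p z)|
      ≤ (n + 1) * p * binomTail n p l := by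
  have hw := binomWeight_nonneg hp hp1 (n + 1)
  rw [show ∑ j ∈ Icc (l + 1) (n + 1),
        binomWeight (n + 1) p j * (max ((j : ℝ) - z) 0 - binomCallExp (n + 1) p z)
      = ∑ j ∈ Icc (l + 1) (n + 1), binomWeight (n + 1) p j * max ((j : ℝ) - z) 0
        - binomTail (n + 1) p (l + 1) * binomCallExp (n + 1) p z by
    simp only [mul_sub, sum_sub_distrib, binomTail, sum_mul]]
  apply abs_sub_le_of_nonneg_of_le
  · exact sum_nonneg fun j _ ↦ mul_nonneg (hw j) (le_max_right _ _)
  · rw [← sum_Icc_binomWeight_mul_self]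
    exact sum_le_sum fun j _ ↦ mul_le_mul_of_nonneg_left (max_natCast_sub_le_self hz j) (hw j)
  · exact mul_nonneg (binomTail_nonneg hp hp1 _ _) (binomCallExp_nonneg hp hp1 _)
  · rw [mul_comm _ (binomTail n p l)]
    exact mul_le_mul (binomTail_succ_succ_le hp hp1 n l) (binomCallExp_le hp hp1 hz n)
      (binomCallExp_nonneg hp hp1 _) (binomTail_nonneg hp hp1 _ _)

lemma pow_mul_abs_steinSol_le (hp : 0 < p) (hp1 : p < 1) (hz : 0 ≤ z) {n l : ℕ} (hl : l ≤ n) :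
    (1 - p) ^ (n - l) * |steinSol (n + 1) p z (l + 1)| ≤ 1 := by
  set g := steinSol (n + 1) p z (l + 1)
  have hw : 0 < binomWeight n p l := binomWeight_pos hp hp1 hl
  have hnp : 0 < ((n : ℝ) + 1) * p := by positivity
  have hgw : |g| * binomWeight n p l ≤ binomTail n p l := by
    have h := steinSol_mul_eq (z := z) hp1.ne (k := l + 1) (n := n + 1) (by omega) (by omega)
    rw [Nat.cast_succ, succ_mul_binomWeight_succ] at h
    have hsum := abs_sum_binomWeight_mul_call_sub_le hp.le hp1.le hz n l
    rw [← abs_neg, ← h, abs_mul, abs_of_pos (mul_pos hnp hw), mul_left_comm] at hsum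
    exact le_of_mul_le_mul_left hsum hnp
  rw [← mul_le_iff_le_one_left hw]
  calc (1 - p) ^ (n - l) * |g| * binomWeight n p l
      ≤ (1 - p) ^ (n - l) * binomTail n p l := by
        rw [mul_assoc]; gcongr
    _ ≤ binomWeight n p l := pow_mul_binomTail_le hp.le hp1.le hl

lemma abs_steinSol_le_zpow (hp : 0 < p) (hp1 : p < 1) (hz : 0 ≤ z) {α k : ℕ} (hk : 1 ≤ k)
    (hkα : k ≤ α) : |steinSol α p z k| ≤ (1 - p) ^ ((k : ℤ) - α) := by
  obtain ⟨l, rfl⟩ := Nat.exists_eq_add_of_le' hk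
  obtain ⟨n, rfl⟩ := Nat.exists_eq_add_of_le' (hk.trans hkα)
  have h := pow_mul_abs_steinSol_le hp hp1 hz (show l ≤ n by omega)
  rw [show ((l + 1 : ℕ) : ℤ) - (n + 1 : ℕ) = -((n - l : ℕ) : ℤ) by omega, zpow_neg,
    zpow_natCast, ← one_div, le_div_iff₀ (pow_pos (by linarith) _), mul_comm]
  exact h

end Stein

/-- Lemma 2.1: for `z ≥ 0` and the Stein solution `g_z`, writing
`Δg_z(k) = g_z(k+1) - g_z(k)`, one has
`|Δg_z(0)| ≤ 2q^{1-α} - q` and `|Δg_z(k)| ≤ 2q^{k-α}` for `1 ≤ k ≤ α`. -/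
theorem steinSol_diff_nonuniform_bound (α : ℕ) (hα : 0 < α) (p q : ℝ)
    (hq : q = 1 - p) (hp : 0 < p) (hp1 : p < 1) (z : ℝ) (hz : 0 ≤ z) :
    |steinSol α p z 1 - steinSol α p z 0| ≤ 2 * q ^ ((1 : ℤ) - (α : ℤ)) - q ∧
      ∀ k, 1 ≤ k → k ≤ α →
        |steinSol α p z (k + 1) - steinSol α p z k| ≤ 2 * q ^ ((k : ℤ) - (α : ℤ)) := by
  subst hq
  have hq0 : 0 < 1 - p := by linarith
  have hq1 : 1 - p ≤ 1 := by linarith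
  have hg := fun k (hk : 1 ≤ k) (hkα : k ≤ α) ↦ abs_steinSol_le_zpow hp hp1 hz hk hkα
  refine ⟨?_, fun k hk hkα ↦ ?_⟩
  · have hone : 1 ≤ (1 - p) ^ ((1 : ℤ) - α) := one_le_zpow_of_nonpos₀ hq0 hq1 (by omega)
    have h1 := hg 1 le_rfl hα
    rw [Nat.cast_one] at h1
    rw [steinSol_zero, sub_zero]
    linarith
  rcases hkα.eq_or_lt with rfl | hlt
  · have h := hg k hk le_rfl
    rw [sub_self, zpow_zero] at h ⊢
    rw [steinSol_of_lt (Nat.lt_succ_self k), zero_sub, abs_neg]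
    linarith
  · have hstep : (1 - p) ^ (((k + 1 : ℕ) : ℤ) - α) ≤ (1 - p) ^ ((k : ℤ) - α) :=
      zpow_le_zpow_right_of_le_one₀ hq0 hq1 (by omega)
    calc |steinSol α p z (k + 1) - steinSol α p z k|
        ≤ |steinSol α p z (k + 1)| + |steinSol α p z k| := abs_sub _ _
      _ ≤ 2 * (1 - p) ^ ((k : ℤ) - α) := by linarith [hg (k + 1) (by omega) hlt, hg k hk hkα]
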